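/- arXiv:1511.02962 — 2 statements merged into one kernel-verified Lean document; each statement's English description precedes it below -/
import Mathlib

section
/- Let Y₁, Y₂, ... be i.i.d. with mean μ, variance σ² > 0, and E|Y|^{2k+1} < ∞. Let Zₙ = √n(Ȳₙ - μ)/σ. Then √n · E[Zₙ^{2k+1}] → k(2k+1)(2k-1)!! μ₃ / (3σ³) as n → ∞, where μ₃ = E[(Y-μ)³]. In particular E[Zₙ^{2k+1}] = O(n^{-1/2}). -/
/-!
Put `X i = (Y i - m) / σ` and `Sₙ = ∑_{i<n} X i`, so that
`√n · E[Zₙ^(2k+1)] = E[Sₙ^(2k+1)] / n^k`. Independence of `X n` and `Sₙ` gives the binomial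
recurrence `E[S_{n+1}^p] = ∑_j C(p,j) E[X^j] E[Sₙ^(p-j)]`, whose terms `j = 0, 1` are `E[Sₙ^p]`
and `0`. By strong induction on `p`, `E[Sₙ^p] / n^⌊p/2⌋` tends to `(p-1)!!` for even `p` and to
`⌊p/2⌋ p (p-2)!! E[X³] / 3` for odd `p`: in the increment `E[S_{n+1}^p] - E[Sₙ^p]` only the
terms `j = 2` and, for odd `p`, `j = 3` are of the top order `n^(⌊p/2⌋-1)`, and the
Stolz–Cesàro theorem turns the asymptotics of the increments into those of `E[Sₙ^p]`.
-/

open MeasureTheory ProbabilityTheory Filter Finset Asymptotics Topology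
open scoped Nat

theorem tendsto_natCast_pow_div_pow_add (j d : ℕ) :
    Tendsto (fun n : ℕ => (n : ℝ) ^ j / (n : ℝ) ^ (j + d)) atTop (𝓝 (0 ^ d)) := by
  refine (tendsto_inv_atTop_nhds_zero_nat.pow d).congr' ?_
  filter_upwards [eventually_ne_atTop 0] with n hn
  have : (n : ℝ) ≠ 0 := by exact_mod_cast hn
  rw [inv_pow, pow_add]
  field_simp

theorem tendsto_div_of_tendsto_sub_div_sub {a b : ℕ → ℝ} {l : ℝ} (hb : StrictMono b)
    (hb_top : Tendsto b atTop atTop)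
    (h : Tendsto (fun n => (a (n + 1) - a n) / (b (n + 1) - b n)) atTop (𝓝 l)) :
    Tendsto (fun n => a n / b n) atTop (𝓝 l) := by
  have hb_succ : ∀ i, 0 < b (i + 1) - b i := fun i => sub_pos.2 (hb (Nat.lt_succ_self i))
  have hf : (fun i => a (i + 1) - a i - l * (b (i + 1) - b i)) =o[atTop]
      fun i => b (i + 1) - b i := by
    refine (isLittleO_iff_tendsto'
      (Eventually.of_forall fun i hi => absurd hi (hb_succ i).ne')).2 ?_
    refine (tendsto_sub_nhds_zero_iff.2 h).congr fun i => ?_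
    field_simp [(hb_succ i).ne']
  have hsum_b : ∀ n, ∑ i ∈ range n, (b (i + 1) - b i) = b n - b 0 := sum_range_sub b
  have hsum_a : ∀ n, ∑ i ∈ range n, (a (i + 1) - a i - l * (b (i + 1) - b i)) =
      a n - a 0 - l * (b n - b 0) := by
    intro n
    rw [sum_sub_distrib, sum_range_sub, ← mul_sum, hsum_b]
  have hsum_o : (fun n => a n - a 0 - l * (b n - b 0)) =o[atTop] fun n => b n - b 0 := by
    have := hf.sum_range (fun i => (hb_succ i).le)
      ((tendsto_atTop_add_const_right _ (-b 0) hb_top).congr fun n => by rw [hsum_b]; ring)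
    simpa only [hsum_a, hsum_b] using this
  have hconst : ∀ c : ℝ, (fun (_ : ℕ) => c) =o[atTop] b :=
    fun c => isLittleO_const_left.2 (Or.inr (tendsto_norm_atTop_atTop.comp hb_top))
  have hmain : (fun n => a n - l * b n) =o[atTop] b := by
    have := (hsum_o.trans_isBigO ((isBigO_refl b atTop).sub (hconst (b 0)).isBigO)).add
      (hconst (a 0 - l * b 0))
    refine this.congr_left fun n => ?_
    ring
  have hdiv : Tendsto (fun n => a n / b n - l) atTop (𝓝 0) := by
    refine hmain.tendsto_div_nhds_zero.congr' ?_
    filter_upwards [hb_top.eventually_ne_atTop 0] with n hn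
    field_simp
  exact tendsto_sub_nhds_zero_iff.1 hdiv

theorem tendsto_succ_pow_sub_pow_div_pow (q : ℕ) :
    Tendsto (fun n : ℕ => (((n : ℝ) + 1) ^ q - (n : ℝ) ^ q) / (n : ℝ) ^ (q - 1))
      atTop (𝓝 q) := by
  have hslope := (hasDerivAt_pow q (1 : ℝ)).tendsto_slope
  simp only [one_pow, mul_one] at hslope
  have hlim : Tendsto (fun n : ℕ => 1 + (n : ℝ)⁻¹) atTop (𝓝[≠] 1) := by
    refine tendsto_nhdsWithin_iff.2 ⟨?_, ?_⟩
    · simpa using tendsto_inv_atTop_nhds_zero_nat.const_add (1 : ℝ)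
    · filter_upwards [eventually_ne_atTop 0] with n hn
      simpa using hn
  refine (hslope.comp hlim).congr' ?_
  filter_upwards [eventually_ne_atTop 0] with n hn
  have hn' : (n : ℝ) ≠ 0 := by exact_mod_cast hn
  rcases q with _ | q
  · simp [slope_def_field]
  simp only [Function.comp_apply, slope_def_field, one_pow, add_sub_cancel_left,
    Nat.add_sub_cancel]
  rw [show 1 + (n : ℝ)⁻¹ = (n + 1) / n by field_simp, div_pow]
  field_simp
  ring

theorem tendsto_div_pow_of_tendsto_sub_div_pow {a : ℕ → ℝ} {q : ℕ} (hq : q ≠ 0) {l : ℝ}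
    (h : Tendsto (fun n : ℕ => (a (n + 1) - a n) / (n : ℝ) ^ (q - 1)) atTop (𝓝 l)) :
    Tendsto (fun n : ℕ => a n / (n : ℝ) ^ q) atTop (𝓝 (l / q)) := by
  refine tendsto_div_of_tendsto_sub_div_sub (b := fun n : ℕ => (n : ℝ) ^ q)
    (fun i j hij => pow_lt_pow_left₀ (by exact_mod_cast hij) i.cast_nonneg hq)
    ((tendsto_pow_atTop hq).comp tendsto_natCast_atTop_atTop) ?_
  refine (h.div (tendsto_succ_pow_sub_pow_div_pow q) (by exact_mod_cast hq)).congr' ?_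
  filter_upwards [eventually_ne_atTop 0] with n hn
  have : (n : ℝ) ^ (q - 1) ≠ 0 := pow_ne_zero _ (by exact_mod_cast hn)
  simp only [Pi.div_apply, Nat.cast_add, Nat.cast_one]
  field_simp

noncomputable def cltMomentLimit (c₃ : ℝ) (p : ℕ) : ℝ :=
  if Even p then ((p - 1)‼ : ℝ) else (p / 2 : ℕ) * p * ((p - 2)‼ : ℝ) / 3 * c₃

theorem cltMomentLimit_two_mul (c₃ : ℝ) (t : ℕ) :
    cltMomentLimit c₃ (2 * t) = ((2 * t - 1)‼ : ℝ) := by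
  simp [cltMomentLimit]

theorem cltMomentLimit_two_mul_add_one (c₃ : ℝ) (t : ℕ) :
    cltMomentLimit c₃ (2 * t + 1) = t * (2 * t + 1) * ((2 * t - 1)‼ : ℝ) / 3 * c₃ := by
  simp [cltMomentLimit, show (2 * t + 1) / 2 = t by omega]

theorem cltMomentLimit_even_rec (c₃ : ℝ) (t : ℕ) :
    (t + 1) * cltMomentLimit c₃ (2 * t + 2) =
      ((2 * t + 2).choose 2 : ℕ) * cltMomentLimit c₃ (2 * t) := by
  rw [show 2 * t + 2 = 2 * (t + 1) by ring, cltMomentLimit_two_mul, cltMomentLimit_two_mul,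
    Nat.cast_choose_two, show 2 * (t + 1) - 1 = 2 * t + 1 by omega, Nat.doubleFactorial_add_one]
  push_cast
  ring

theorem cltMomentLimit_odd_rec (c₃ : ℝ) (t : ℕ) :
    (t + 1) * cltMomentLimit c₃ (2 * t + 3) =
      ((2 * t + 3).choose 2 : ℕ) * cltMomentLimit c₃ (2 * t + 1) +
        ((2 * t + 3).choose 3 : ℕ) * c₃ * cltMomentLimit c₃ (2 * t) := by
  have hchoose : ((2 * t + 3).choose 3 : ℝ) * 3 = (2 * t + 3) * ((2 * t + 2).choose 2 : ℕ) :=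
    by exact_mod_cast (Nat.add_one_mul_choose_eq (2 * t + 2) 2).symm
  have hL : cltMomentLimit c₃ (2 * t + 3) =
      (t + 1) * (2 * t + 3) * ((2 * t + 1)‼ : ℝ) / 3 * c₃ := by
    rw [show 2 * t + 3 = 2 * (t + 1) + 1 by ring, cltMomentLimit_two_mul_add_one,
      show 2 * (t + 1) - 1 = 2 * t + 1 by omega]
    push_cast
    ring
  rw [hL, cltMomentLimit_two_mul_add_one, cltMomentLimit_two_mul, Nat.doubleFactorial_add_one,
    eq_div_of_mul_eq three_ne_zero hchoose, Nat.cast_choose_two, Nat.cast_choose_two]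
  push_cast
  ring

theorem sum_choose_mul_cltMomentLimit {c : ℕ → ℝ} (hc₂ : c 2 = 1) {p : ℕ} (hp : 2 ≤ p) :
    ∑ j ∈ Ico 2 (p + 1), (p.choose j : ℝ) * c j *
        (cltMomentLimit (c 3) (p - j) * 0 ^ (p / 2 - 1 - (p - j) / 2)) =
      (p / 2 : ℕ) * cltMomentLimit (c 3) p := by
  have hvanish : ∀ j ∈ Ico 2 (p + 1), p / 2 - 1 - (p - j) / 2 ≠ 0 →
      (p.choose j : ℝ) * c j * (cltMomentLimit (c 3) (p - j) * 0 ^ (p / 2 - 1 - (p - j) / 2))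
        = 0 := fun j _ hj => by rw [zero_pow hj, mul_zero, mul_zero]
  obtain ⟨t, rfl | rfl⟩ := Nat.even_or_odd' p
  · obtain ⟨t, rfl⟩ : ∃ s, t = s + 1 := ⟨t - 1, by omega⟩
    rw [sum_eq_single_of_mem 2 (by simp) fun j hj _ => hvanish j hj (by
      simp only [mem_Ico] at hj; omega)]
    rw [show 2 * (t + 1) = 2 * t + 2 by ring, show (2 * t + 2) / 2 = t + 1 by omega,
      show 2 * t + 2 - 2 = 2 * t by omega, show t + 1 - 1 - 2 * t / 2 = 0 by omega]
    push_cast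
    rw [cltMomentLimit_even_rec, hc₂]
    ring
  · obtain ⟨t, rfl⟩ : ∃ s, t = s + 1 := ⟨t - 1, by omega⟩
    rw [sum_eq_sum_Ico_succ_bot (by omega), sum_eq_sum_Ico_succ_bot (by omega),
      sum_eq_zero fun j hj => hvanish j (Ico_subset_Ico_left (by omega) hj) (by
        simp only [mem_Ico] at hj; omega)]
    rw [show 2 * (t + 1) + 1 = 2 * t + 3 by ring, show (2 * t + 3) / 2 = t + 1 by omega,
      show 2 * t + 3 - 2 = 2 * t + 1 by omega, show 2 * t + 3 - 3 = 2 * t by omega,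
      show t + 1 - 1 - (2 * t + 1) / 2 = 0 by omega, show t + 1 - 1 - 2 * t / 2 = 0 by omega]
    push_cast
    rw [cltMomentLimit_odd_rec, hc₂]
    ring

def BinomialRecurrence (c : ℕ → ℝ) (M : ℕ → ℕ → ℝ) (P : ℕ) : Prop :=
  ∀ n p, p ≤ P → M (n + 1) p = ∑ j ∈ range (p + 1), (p.choose j : ℝ) * c j * M n (p - j)

namespace BinomialRecurrence

variable {c : ℕ → ℝ} {M : ℕ → ℕ → ℝ} {P : ℕ}

theorem apply_zero (hrec : BinomialRecurrence c M P) (hc₀ : c 0 = 1) (hM₀ : M 0 0 = 1)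
    (n : ℕ) : M n 0 = 1 := by
  induction n with
  | zero => exact hM₀
  | succ n ih => simp [hrec n 0 (Nat.zero_le P), hc₀, ih]

theorem apply_one (hrec : BinomialRecurrence c M P) (hP : 1 ≤ P) (hc₀ : c 0 = 1)
    (hc₁ : c 1 = 0) (hM₁ : M 0 1 = 0) (n : ℕ) : M n 1 = 0 := by
  induction n with
  | zero => exact hM₁
  | succ n ih => simp [hrec n 1 hP, sum_range_succ, hc₀, hc₁, ih]

theorem sub_eq_sum_Ico (hrec : BinomialRecurrence c M P) {p : ℕ} (hp : 1 ≤ p) (hpP : p ≤ P)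
    (hc₀ : c 0 = 1) (hc₁ : c 1 = 0) (n : ℕ) :
    M (n + 1) p - M n p = ∑ j ∈ Ico 2 (p + 1), (p.choose j : ℝ) * c j * M n (p - j) := by
  rw [hrec n p hpP, range_eq_Ico, sum_eq_sum_Ico_succ_bot (by omega),
    sum_eq_sum_Ico_succ_bot (by omega)]
  simp [hc₀, hc₁]

theorem tendsto_div_pow (hrec : BinomialRecurrence c M P) (hc₀ : c 0 = 1) (hc₁ : c 1 = 0)
    (hc₂ : c 2 = 1) (hM₀ : M 0 0 = 1) (hM₁ : M 0 1 = 0) {p : ℕ} (hpP : p ≤ P) :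
    Tendsto (fun n : ℕ => M n p / (n : ℝ) ^ (p / 2)) atTop (𝓝 (cltMomentLimit (c 3) p)) := by
  induction p using Nat.strong_induction_on with
  | _ p ih =>
  match p with
  | 0 => simp [hrec.apply_zero hc₀ hM₀, cltMomentLimit]
  | 1 => simp [hrec.apply_one hpP hc₀ hc₁ hM₁, cltMomentLimit]
  | p + 2 =>
  have hterm : ∀ j ∈ Ico 2 (p + 2 + 1), Tendsto
      (fun n : ℕ => (p + 2).choose j * c j * M n (p + 2 - j) / (n : ℝ) ^ ((p + 2) / 2 - 1))
      atTop (𝓝 ((p + 2).choose j * c j *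
        (cltMomentLimit (c 3) (p + 2 - j) * 0 ^ ((p + 2) / 2 - 1 - (p + 2 - j) / 2)))) := by
    intro j hj
    simp only [mem_Ico] at hj
    have hpow := tendsto_natCast_pow_div_pow_add ((p + 2 - j) / 2)
      ((p + 2) / 2 - 1 - (p + 2 - j) / 2)
    rw [show (p + 2 - j) / 2 + ((p + 2) / 2 - 1 - (p + 2 - j) / 2) = (p + 2) / 2 - 1 by omega]
      at hpow
    refine (((ih _ (by omega) (by omega)).mul hpow).const_mul _).congr' ?_
    filter_upwards [eventually_ne_atTop 0] with n hn
    have : (n : ℝ) ≠ 0 := by exact_mod_cast hn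
    field_simp
  have hsub := (tendsto_finsetSum _ hterm).congr fun n => by
    rw [← sum_div, ← hrec.sub_eq_sum_Ico (p := p + 2) (by omega) hpP hc₀ hc₁]
  have := tendsto_div_pow_of_tendsto_sub_div_pow (a := fun n => M n (p + 2))
    (q := (p + 2) / 2) (by omega) hsub
  rwa [sum_choose_mul_cltMomentLimit hc₂ (by omega),
    mul_div_cancel_left₀ _ (by norm_cast; omega)] at this

end BinomialRecurrence

section Moments

variable {Ω : Type*} [MeasurableSpace Ω] {μ : Measure Ω}

theorem MeasureTheory.MemLp.integrable_pow_of_le [IsFiniteMeasure μ] {f : Ω → ℝ} {N r : ℕ}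
    (hf : MemLp f N μ) (hr : r ≤ N) : Integrable (fun ω => f ω ^ r) μ := by
  refine (hf.mono_exponent (by exact_mod_cast hr)).integrable_norm_pow'.mono'
    (hf.aestronglyMeasurable.pow r) (Eventually.of_forall fun ω => ?_)
  simp [norm_pow]

theorem ProbabilityTheory.IndepFun.moment_add [IsFiniteMeasure μ] {X S : Ω → ℝ}
    (h : IndepFun X S μ) {N : ℕ} (hX : MemLp X N μ) (hS : MemLp S N μ) {r : ℕ} (hr : r ≤ N) :
    moment (X + S) r μ =
      ∑ j ∈ range (r + 1), (r.choose j : ℝ) * moment X j μ * moment S (r - j) μ := by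
  have hpow (j : ℕ) := h.comp (measurable_id.pow_const j) (measurable_id.pow_const (r - j))
  have hint : ∀ j ∈ range (r + 1),
      Integrable (fun ω => X ω ^ j * S ω ^ (r - j) * r.choose j) μ := fun j hj => by
    have hj : j ≤ r := Nat.lt_succ_iff.1 (mem_range.1 hj)
    exact ((hpow j).integrable_mul (hX.integrable_pow_of_le (by omega))
      (hS.integrable_pow_of_le (by omega))).mul_const _
  simp only [moment, Pi.pow_apply, Pi.add_apply, add_pow]
  rw [integral_finsetSum _ hint]
  refine sum_congr rfl fun j _ => ?_
  have hprod : ∫ ω, X ω ^ j * S ω ^ (r - j) ∂μ =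
      (∫ ω, X ω ^ j ∂μ) * ∫ ω, S ω ^ (r - j) ∂μ :=
    (hpow j).integral_fun_mul_eq_mul_integral (hX.aestronglyMeasurable.pow j)
      (hS.aestronglyMeasurable.pow (r - j))
  rw [integral_mul_const, hprod]
  ring

theorem ProbabilityTheory.iIndepFun.binomialRecurrence_moment_sum [IsFiniteMeasure μ]
    {X : ℕ → Ω → ℝ} (hindep : iIndepFun X μ) (hident : ∀ i, IdentDistrib (X i) (X 0) μ μ)
    {N : ℕ} (hLp : ∀ i, MemLp (X i) N μ) :
    BinomialRecurrence (fun j => moment (X 0) j μ)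
      (fun n p => moment (∑ i ∈ range n, X i) p μ) N := by
  intro n r hr
  have hindep_n : IndepFun (X n) (∑ i ∈ range n, X i) μ :=
    (hindep.indepFun_sum_range_succ₀ (fun i => (hLp i).aestronglyMeasurable.aemeasurable) n).symm
  beta_reduce
  rw [sum_range_succ X n, add_comm,
    hindep_n.moment_add (hLp n) (memLp_finsetSum' _ fun i _ => hLp i) hr]
  refine sum_congr rfl fun j _ => ?_
  have hmoment : moment (X n) j μ = moment (X 0) j μ :=
    ((hident n).comp (measurable_id.pow_const j)).integral_eq
  rw [hmoment]

theorem ProbabilityTheory.iIndepFun.tendsto_moment_sum_div_pow [IsProbabilityMeasure μ]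
    {X : ℕ → Ω → ℝ} (hindep : iIndepFun X μ) (hident : ∀ i, IdentDistrib (X i) (X 0) μ μ)
    {N : ℕ} (hLp : ∀ i, MemLp (X i) N μ) (hmean : moment (X 0) 1 μ = 0)
    (hvar : moment (X 0) 2 μ = 1) {p : ℕ} (hp : p ≤ N) :
    Tendsto (fun n : ℕ => moment (∑ i ∈ range n, X i) p μ / (n : ℝ) ^ (p / 2)) atTop
      (𝓝 (cltMomentLimit (moment (X 0) 3 μ) p)) :=
  (hindep.binomialRecurrence_moment_sum hident hLp).tendsto_div_pow (by simp [moment]) hmean hvar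
    (by simp [moment]) (by simp [moment]) hp

theorem sqrt_mul_integral_standardizedMean_pow (Y : ℕ → Ω → ℝ) (m σ : ℝ) (k : ℕ) {n : ℕ}
    (hn : 0 < n) :
    √n * ∫ ω, (√n * ((n : ℝ)⁻¹ * ∑ i ∈ range n, Y i ω - m) / σ) ^ (2 * k + 1) ∂μ =
      moment (∑ i ∈ range n, fun ω => (Y i ω - m) / σ) (2 * k + 1) μ / (n : ℝ) ^ k := by
  have hsqrt : (0 : ℝ) < √n := Real.sqrt_pos.2 (by exact_mod_cast hn)
  have hrescale : ∀ ω, √n * ((n : ℝ)⁻¹ * ∑ i ∈ range n, Y i ω - m) / σ =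
      (√n)⁻¹ * ∑ i ∈ range n, (Y i ω - m) / σ := fun ω => by
    rw [← sum_div, sum_sub_distrib, sum_const, card_range, nsmul_eq_mul]
    field_simp
    rw [Real.sq_sqrt (Nat.cast_nonneg n)]
  simp only [hrescale, mul_pow, integral_const_mul, moment, Pi.pow_apply, Finset.sum_apply]
  rw [show (n : ℝ) ^ k = √n ^ (2 * k) by rw [pow_mul, Real.sq_sqrt (Nat.cast_nonneg n)],
    inv_pow, pow_succ]
  field_simp

end Moments

theorem odd_moment_rate_clt_general
    {Ω : Type*} [MeasurableSpace Ω] (μ : Measure Ω) [IsProbabilityMeasure μ]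
    (Y : ℕ → Ω → ℝ)
    (hindep : iIndepFun Y μ)
    (hident : ∀ i j, IdentDistrib (Y i) (Y j) μ μ)
    (m : ℝ) (hm : ∀ i, ∫ ω, Y i ω ∂μ = m)
    (σ : ℝ) (hσ : 0 < σ) (hvar : ∀ i, ∫ ω, (Y i ω - m) ^ 2 ∂μ = σ ^ 2)
    (k : ℕ) (hLp : ∀ i, MemLp (Y i) (2 * k + 1) μ)
    (μ₃ : ℝ) (hμ₃ : ∫ ω, (Y 0 ω - m) ^ 3 ∂μ = μ₃)
    (Z : ℕ → Ω → ℝ)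
    (hZ : ∀ n ω, Z n ω =
      Real.sqrt n * ((n : ℝ)⁻¹ * ∑ i ∈ Finset.range n, Y i ω - m) / σ) :
    Tendsto (fun n : ℕ => Real.sqrt n * ∫ ω, Z n ω ^ (2 * k + 1) ∂μ)
      atTop (nhds ((k : ℝ) * (2 * (k : ℝ) + 1) * (Nat.doubleFactorial (2 * k - 1) : ℝ) *
        μ₃ / (3 * σ ^ 3))) := by
  set X : ℕ → Ω → ℝ := fun i ω => (Y i ω - m) / σ with hX
  have hstd : Measurable fun y : ℝ => (y - m) / σ := by fun_prop
  have hXLp : ∀ i, MemLp (X i) (2 * k + 1 : ℕ) μ := fun i => by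
    push_cast
    exact ((hLp i).sub (memLp_const m)).mul_const σ⁻¹
  have hmoment : ∀ j, moment (X 0) j μ = (∫ ω, (Y 0 ω - m) ^ j ∂μ) / σ ^ j := fun j => by
    simp only [moment, hX, Pi.pow_apply, div_pow, integral_div]
  have hX_mean : moment (X 0) 1 μ = 0 := by
    simp only [hmoment, pow_one]
    rw [integral_sub ((hLp 0).integrable (by simp)) (integrable_const m), hm, integral_const]
    simp
  have hX_var : moment (X 0) 2 μ = 1 := by rw [hmoment, hvar, div_self (by positivity)]
  have hlim := iIndepFun.tendsto_moment_sum_div_pow (X := X) (hindep.comp _ fun _ => hstd)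
    (fun i => (hident i 0).comp hstd) hXLp hX_mean hX_var le_rfl
  rw [hmoment, hμ₃, cltMomentLimit_two_mul_add_one, show (2 * k + 1) / 2 = k by omega] at hlim
  convert hlim.congr' ((eventually_gt_atTop 0).mono fun n hn => ?_) using 2
  · ring
  · simp only [hZ, sqrt_mul_integral_standardizedMean_pow Y m σ k hn, hX]

/-- Rate of convergence of odd moments in the CLT: for i.i.d. `Yᵢ` with
mean `μ`, variance `σ² > 0` and `E|Y|^{2k+1} < ∞`,
`√n · E[Zₙ^{2k+1}] → k(2k+1)(2k-1)!! μ₃ / (3σ³)`. -/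
theorem odd_moment_rate_clt
    {Ω : Type*} [MeasurableSpace Ω] (μ : Measure Ω) [IsProbabilityMeasure μ]
    (Y : ℕ → Ω → ℝ) (hmeas : ∀ i, Measurable (Y i))
    (hindep : iIndepFun Y μ)
    (hident : ∀ i j, IdentDistrib (Y i) (Y j) μ μ)
    (m : ℝ) (hm : ∀ i, ∫ ω, Y i ω ∂μ = m)
    (σ : ℝ) (hσ : 0 < σ) (hvar : ∀ i, ∫ ω, (Y i ω - m) ^ 2 ∂μ = σ ^ 2)
    (k : ℕ) (hk : 1 ≤ k) (hLp : ∀ i, MemLp (Y i) (2 * k + 1) μ)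
    (μ₃ : ℝ) (hμ₃ : ∫ ω, (Y 0 ω - m) ^ 3 ∂μ = μ₃)
    (Z : ℕ → Ω → ℝ)
    (hZ : ∀ n ω, Z n ω =
      Real.sqrt n * ((n : ℝ)⁻¹ * ∑ i ∈ Finset.range n, Y i ω - m) / σ) :
    Tendsto (fun n : ℕ => Real.sqrt n * ∫ ω, Z n ω ^ (2 * k + 1) ∂μ)
      atTop (nhds ((k : ℝ) * (2 * (k : ℝ) + 1) * (Nat.doubleFactorial (2 * k - 1) : ℝ) *
        μ₃ / (3 * σ ^ 3))) :=
  odd_moment_rate_clt_general μ Y hindep hident m hm σ hσ hvar k hLp μ₃ hμ₃ Z hZ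
end

section
/- Consider the one-parameter model Yᵢ = (1+βᵢ)^{1/2}μ + εᵢ with i.i.d. errors of mean 0 and variance σ², where βᵢ = i·αᵢ^{-1/2} - (i-1)·α_{i-1}^{-1/2} for a positive increasing sequence αₙ → ∞ with n⁻¹αₙ decreasing to 0. Then the OLS estimator μ̂ satisfies: (1/n)XᵀX = 1 + αₙ^{-1/2} → 1, ξₙ = √n(μ̂-μ) has E[ξₙ²] = σ²/(1+αₙ^{-1/2}), and αₙ(E[ξₙ²] - σ²) = -σ²·αₙ^{1/2}/(1+αₙ^{-1/2}) → -∞ as n → ∞. -/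
open MeasureTheory ProbabilityTheory Filter

/-!
Because `βᵢ` telescopes, `∑_{i ≤ n} xᵢ² = n + n/√αₙ`, so the least-squares error
`μ̂ₙ - μ = (∑ xᵢεᵢ)/(∑ xᵢ²)` has second moment `σ²/(n(1 + 1/√αₙ))` and
`αₙ(E[ξₙ²] - σ²) = -σ²αₙ/(√αₙ + 1) ≤ -σ²(√αₙ - 1) → -∞`. The monotonicity of `αₙ/n` is what
makes `βᵢ ≥ 0`, so that `xᵢ² = 1 + βᵢ`.
-/

theorem Finset.sum_Icc_one_sub_pred {M : Type*} [AddCommGroup M] (f : ℕ → M) (n : ℕ) :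
    ∑ i ∈ Finset.Icc 1 n, (f i - f (i - 1)) = f n - f 0 := by
  induction n with
  | zero => simp
  | succ n ih =>
    rw [Finset.sum_Icc_succ_top (by omega), ih, Nat.add_sub_cancel]
    abel

lemma monotone_natCast_div_sqrt {α : ℕ → ℝ} (hαpos : ∀ n, 0 < α n)
    (hαanti : AntitoneOn (fun n : ℕ => α n / n) (Set.Ici 1)) :
    Monotone (fun n : ℕ => (n : ℝ) / √(α n)) := by
  refine monotone_nat_of_le_succ fun n => ?_
  rcases Nat.eq_zero_or_pos n with rfl | hn
  · simp only [CharP.cast_eq_zero, zero_div]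
    positivity
  have hdiv : α (n + 1) / (n + 1 : ℕ) ≤ α n / n :=
    hαanti (Set.mem_Ici.2 hn) (Set.mem_Ici.2 (by omega)) (Nat.le_succ n)
  have hn' : (0 : ℝ) < n := by exact_mod_cast hn
  push_cast at hdiv ⊢
  rw [div_le_div_iff₀ (by positivity) hn'] at hdiv
  have hsq : ∀ k : ℕ, (k : ℝ) / √(α k) = √((k : ℝ) ^ 2 / α k) := fun k => by
    rw [Real.sqrt_div (sq_nonneg _), Real.sqrt_sq (Nat.cast_nonneg k)]
  rw [hsq n, show (n : ℝ) + 1 = ((n + 1 : ℕ) : ℝ) by push_cast; ring, hsq (n + 1)]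
  refine Real.sqrt_le_sqrt ?_
  rw [div_le_div_iff₀ (hαpos n) (hαpos _)]
  push_cast
  nlinarith [hαpos n, hαpos (n + 1)]

lemma tendsto_sq_mul_div_one_add_inv_sub_atBot {c : ℝ} (hc : 0 < c) :
    Tendsto (fun t : ℝ => t ^ 2 * (c / (1 + 1 / t) - c)) atTop atBot := by
  have hlin : Tendsto (fun t : ℝ => -c * (t - 1)) atTop atBot :=
    (tendsto_atTop_add_const_right _ (-1) tendsto_id).const_mul_atTop_of_neg (neg_neg_of_pos hc)
  refine tendsto_atBot_mono' atTop ?_ hlin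
  filter_upwards [eventually_gt_atTop 0] with t ht
  have hrat : t ^ 2 * (c / (1 + 1 / t) - c) = -c * (t ^ 2 / (t + 1)) := by
    field_simp
    ring
  have hquot : t - 1 ≤ t ^ 2 / (t + 1) := by
    rw [le_div_iff₀ (by positivity)]
    nlinarith
  rw [hrat]
  exact mul_le_mul_of_nonpos_left hquot (by linarith)

lemma leastSquares_sub_eq {ι : Type*} (s : Finset ι) (x e : ι → ℝ) (m : ℝ)
    (hS : ∑ i ∈ s, x i ^ 2 ≠ 0) :
    (∑ i ∈ s, x i * (x i * m + e i)) / (∑ i ∈ s, x i ^ 2) - m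
      = (∑ i ∈ s, x i * e i) / ∑ i ∈ s, x i ^ 2 := by
  have hsum : ∑ i ∈ s, x i * (x i * m + e i) = (∑ i ∈ s, x i ^ 2) * m + ∑ i ∈ s, x i * e i := by
    rw [Finset.sum_mul, ← Finset.sum_add_distrib]
    exact Finset.sum_congr rfl fun i _ => by ring
  rw [hsum, add_div, mul_div_cancel_left₀ m hS, add_sub_cancel_left]

section Moments

variable {Ω ι : Type*} [MeasurableSpace Ω] {μ : Measure Ω} [IsFiniteMeasure μ]
  {ε : ι → Ω → ℝ}

lemma integral_sq_sum_const_mul_of_pairwise_indepFun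
    (hindep : Pairwise fun i j => IndepFun (ε i) (ε j) μ) (hL2 : ∀ i, MemLp (ε i) 2 μ)
    (hmean : ∀ i, ∫ ω, ε i ω ∂μ = 0) (s : Finset ι) (c : ι → ℝ) :
    ∫ ω, (∑ i ∈ s, c i * ε i ω) ^ 2 ∂μ = ∑ i ∈ s, c i ^ 2 * ∫ ω, ε i ω ^ 2 ∂μ := by
  set X : ι → Ω → ℝ := fun i ω => c i * ε i ω
  have hX : ∀ i, MemLp (X i) 2 μ := fun i => (hL2 i).const_mul (c i)
  have hXmean : ∀ i, ∫ ω, X i ω ∂μ = 0 := fun i => by simp [X, integral_const_mul, hmean i]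
  have hXindep : Pairwise fun i j => IndepFun (X i) (X j) μ := fun i j hij =>
    (hindep hij).comp (measurable_const_mul (c i)) (measurable_const_mul (c j))
  have hsum_mean : ∫ ω, (∑ i ∈ s, X i) ω ∂μ = 0 := by
    simp only [Finset.sum_apply]
    rw [integral_finsetSum _ fun i _ => (hX i).integrable one_le_two]
    exact Finset.sum_eq_zero fun i _ => hXmean i
  calc ∫ ω, (∑ i ∈ s, c i * ε i ω) ^ 2 ∂μ
      = Var[∑ i ∈ s, X i; μ] := by
        rw [variance_of_integral_eq_zero (memLp_finsetSum' s fun i _ => hX i).aemeasurable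
          hsum_mean]
        simp only [Finset.sum_apply, X]
    _ = ∑ i ∈ s, Var[X i; μ] :=
        IndepFun.variance_sum (fun i _ => hX i) fun i _ j _ hij => hXindep hij
    _ = ∑ i ∈ s, c i ^ 2 * ∫ ω, ε i ω ^ 2 ∂μ := by
        refine Finset.sum_congr rfl fun i _ => ?_
        rw [variance_const_mul, variance_of_integral_eq_zero (hL2 i).aemeasurable (hmean i)]

lemma integral_sq_leastSquares_sub
    (hindep : Pairwise fun i j => IndepFun (ε i) (ε j) μ) (hL2 : ∀ i, MemLp (ε i) 2 μ)
    (hmean : ∀ i, ∫ ω, ε i ω ∂μ = 0) {σ : ℝ} (hvar : ∀ i, ∫ ω, ε i ω ^ 2 ∂μ = σ ^ 2)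
    (s : Finset ι) (x : ι → ℝ) (m : ℝ) (hS : ∑ i ∈ s, x i ^ 2 ≠ 0) :
    ∫ ω, ((∑ i ∈ s, x i * (x i * m + ε i ω)) / (∑ i ∈ s, x i ^ 2) - m) ^ 2 ∂μ
      = σ ^ 2 / ∑ i ∈ s, x i ^ 2 := by
  simp_rw [leastSquares_sub_eq s x _ m hS, div_pow, integral_div,
    integral_sq_sum_const_mul_of_pairwise_indepFun hindep hL2 hmean, hvar, ← Finset.sum_mul]
  field_simp

end Moments

theorem slow_second_moment_counterexample_general
    {Ω : Type*} [MeasurableSpace Ω] (μ : Measure Ω) [IsProbabilityMeasure μ]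
    (α : ℕ → ℝ) (hαpos : ∀ n, 0 < α n)
    (hαtop : Tendsto α atTop atTop)
    (hαanti : StrictAntiOn (fun n : ℕ => α n / n) (Set.Ici 1))
    (β : ℕ → ℝ)
    (hβ : ∀ i : ℕ, 1 ≤ i →
      β i = i / Real.sqrt (α i) - (i - 1 : ℕ) / Real.sqrt (α (i - 1)))
    (x : ℕ → ℝ) (hx : ∀ i : ℕ, 1 ≤ i → x i = Real.sqrt (1 + β i))
    (ε : ℕ → Ω → ℝ)
    (hindep : iIndepFun ε μ)
    (hL2 : ∀ i, MemLp (ε i) 2 μ)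
    (hmean : ∀ i, ∫ ω, ε i ω ∂μ = 0)
    (σ : ℝ) (hσ : 0 < σ) (hvar : ∀ i, ∫ ω, (ε i ω) ^ 2 ∂μ = σ ^ 2)
    (m : ℝ) (Y : ℕ → Ω → ℝ) (hY : ∀ i ω, Y i ω = x i * m + ε i ω)
    (muhat : ℕ → Ω → ℝ)
    (hmuhat : ∀ n ω, muhat n ω =
      (∑ i ∈ Finset.Icc 1 n, x i * Y i ω) / (∑ i ∈ Finset.Icc 1 n, x i ^ 2))
    (ξ : ℕ → Ω → ℝ) (hξ : ∀ n ω, ξ n ω = Real.sqrt n * (muhat n ω - m)) :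
    (∀ n : ℕ, 1 ≤ n →
      (n : ℝ)⁻¹ * ∑ i ∈ Finset.Icc 1 n, x i ^ 2 = 1 + 1 / Real.sqrt (α n)) ∧
    (∀ n : ℕ, 1 ≤ n →
      ∫ ω, (ξ n ω) ^ 2 ∂μ = σ ^ 2 / (1 + 1 / Real.sqrt (α n))) ∧
    Tendsto (fun n : ℕ => α n * ((∫ ω, (ξ n ω) ^ 2 ∂μ) - σ ^ 2)) atTop atBot := by
  set g : ℕ → ℝ := fun n => n / √(α n)
  have hg : Monotone g := monotone_natCast_div_sqrt hαpos hαanti.antitoneOn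
  have hsum_sq : ∀ n, 1 ≤ n → ∑ i ∈ Finset.Icc 1 n, x i ^ 2 = n * (1 + 1 / √(α n)) := by
    intro n hn
    have hx_sq : ∀ i ∈ Finset.Icc 1 n, x i ^ 2 = 1 + (g i - g (i - 1)) := fun i hi => by
      have hi1 := (Finset.mem_Icc.1 hi).1
      rw [hx i hi1, Real.sq_sqrt (by linarith [hβ i hi1, hg (Nat.sub_le i 1)]), hβ i hi1]
    rw [Finset.sum_congr rfl hx_sq, Finset.sum_add_distrib, Finset.sum_Icc_one_sub_pred]
    simp only [Finset.sum_const, Nat.card_Icc, add_tsub_cancel_right, nsmul_eq_mul, mul_one,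
      CharP.cast_eq_zero, zero_div, sub_zero, g]
    ring
  have hmoment : ∀ n, 1 ≤ n → ∫ ω, ξ n ω ^ 2 ∂μ = σ ^ 2 / (1 + 1 / √(α n)) := by
    intro n hn
    have hS := hsum_sq n hn
    have hS_pos : 0 < ∑ i ∈ Finset.Icc 1 n, x i ^ 2 := by
      rw [hS]
      have : (0 : ℝ) < n := by exact_mod_cast hn
      positivity
    simp_rw [hξ, hmuhat, hY, mul_pow, Real.sq_sqrt (Nat.cast_nonneg _)]
    rw [integral_const_mul, integral_sq_leastSquares_sub (fun i j hij => hindep.indepFun hij)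
      hL2 hmean hvar _ _ _ hS_pos.ne', hS]
    field_simp
  refine ⟨fun n hn => ?_, hmoment, ?_⟩
  · rw [hsum_sq n hn, inv_mul_cancel_left₀ (by positivity)]
  refine ((tendsto_sq_mul_div_one_add_inv_sub_atBot (pow_pos hσ 2)).comp
    (Real.tendsto_sqrt_atTop.comp hαtop)).congr' ?_
  filter_upwards [eventually_ge_atTop 1] with n hn
  simp [hmoment n hn, Real.sq_sqrt (hαpos n).le]

/-- The counterexample model `Yᵢ = (1+βᵢ)^{1/2}μ + εᵢ` with
`βᵢ = i·αᵢ^{-1/2} - (i-1)·α_{i-1}^{-1/2}`: one has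
`(1/n)XᵀX = 1 + αₙ^{-1/2} → 1`, `E[ξₙ²] = σ²/(1+αₙ^{-1/2})` for
`ξₙ = √n(μ̂ₙ - μ)`, and `αₙ(E[ξₙ²] - σ²) → -∞`. -/
theorem slow_second_moment_counterexample
    {Ω : Type*} [MeasurableSpace Ω] (μ : Measure Ω) [IsProbabilityMeasure μ]
    (α : ℕ → ℝ) (hαpos : ∀ n, 0 < α n) (hαmono : StrictMono α)
    (hαtop : Tendsto α atTop atTop)
    (hαanti : StrictAntiOn (fun n : ℕ => α n / n) (Set.Ici 1))
    (hαzero : Tendsto (fun n : ℕ => α n / n) atTop (nhds 0))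
    (β : ℕ → ℝ)
    (hβ : ∀ i : ℕ, 1 ≤ i →
      β i = i / Real.sqrt (α i) - (i - 1 : ℕ) / Real.sqrt (α (i - 1)))
    (x : ℕ → ℝ) (hx : ∀ i : ℕ, 1 ≤ i → x i = Real.sqrt (1 + β i))
    (ε : ℕ → Ω → ℝ) (hmeas : ∀ i, Measurable (ε i))
    (hindep : iIndepFun ε μ)
    (hident : ∀ i j, IdentDistrib (ε i) (ε j) μ μ)
    (hL2 : ∀ i, MemLp (ε i) 2 μ)
    (hmean : ∀ i, ∫ ω, ε i ω ∂μ = 0)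
    (σ : ℝ) (hσ : 0 < σ) (hvar : ∀ i, ∫ ω, (ε i ω) ^ 2 ∂μ = σ ^ 2)
    (m : ℝ) (Y : ℕ → Ω → ℝ) (hY : ∀ i ω, Y i ω = x i * m + ε i ω)
    (muhat : ℕ → Ω → ℝ)
    (hmuhat : ∀ n ω, muhat n ω =
      (∑ i ∈ Finset.Icc 1 n, x i * Y i ω) / (∑ i ∈ Finset.Icc 1 n, x i ^ 2))
    (ξ : ℕ → Ω → ℝ) (hξ : ∀ n ω, ξ n ω = Real.sqrt n * (muhat n ω - m)) :
    (∀ n : ℕ, 1 ≤ n →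
      (n : ℝ)⁻¹ * ∑ i ∈ Finset.Icc 1 n, x i ^ 2 = 1 + 1 / Real.sqrt (α n)) ∧
    (∀ n : ℕ, 1 ≤ n →
      ∫ ω, (ξ n ω) ^ 2 ∂μ = σ ^ 2 / (1 + 1 / Real.sqrt (α n))) ∧
    Tendsto (fun n : ℕ => α n * ((∫ ω, (ξ n ω) ^ 2 ∂μ) - σ ^ 2)) atTop atBot :=
  slow_second_moment_counterexample_general μ α hαpos hαtop hαanti β hβ x hx ε hindep hL2 hmean σ hσ
    hvar m Y hY muhat hmuhat ξ hξ
end
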